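/- The group PGL₂(ℂ)×PGL₂(ℂ) acts transitively on the open locus U ⊂ P(V_{1,2}) of smooth curves of bidegree (1,2) on P¹×P¹. Moreover, the stabilizer G in PGL₂×PGL₂ of the curve C = {X₁Y₂² + Y₁X₂² = 0} ∈ U is isomorphic to the semidirect product (ℤ/2ℤ) ⋉ ℂ^×, where the generator of ℤ/2ℤ acts by [X_i, Y_i] ↦ [Y_i, X_i] on both factors, and α ∈ ℂ^× acts by [X₁, Y₁] ↦ [X₁, α²Y₁] and [X₂, Y₂] ↦ [X₂, αY₂]. -/

import Mathlib

set_option synthInstance.maxHeartbeats 1000000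
set_option maxHeartbeats 1000000
noncomputable section
open MvPolynomial

abbrev SL2 := Matrix.SpecialLinearGroup (Fin 2) ℂ

/-- The action of `(g,h) ∈ SL₂ × SL₂` on polynomials in the bihomogeneous coordinates
`([X₁,Y₁],[X₂,Y₂])` of `P¹ × P¹`. -/
def biSubst (g h : SL2) :
    MvPolynomial (Fin 2 ⊕ Fin 2) ℂ →ₐ[ℂ] MvPolynomial (Fin 2 ⊕ Fin 2) ℂ :=
  aeval (Sum.elim (fun i => ∑ j, C (g.1 i j) * X (Sum.inl j))
    (fun i => ∑ j, C (h.1 i j) * X (Sum.inr j)))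

/-- `F` is bihomogeneous of bidegree `(a, b)`. -/
def IsBihom (a b : ℕ) (F : MvPolynomial (Fin 2 ⊕ Fin 2) ℂ) : Prop :=
  ∀ d ∈ F.support, d (Sum.inl 0) + d (Sum.inl 1) = a ∧ d (Sum.inr 0) + d (Sum.inr 1) = b

/-- The curve `{F = 0} ⊂ P¹ × P¹` is smooth. -/
def SmoothCurve (F : MvPolynomial (Fin 2 ⊕ Fin 2) ℂ) : Prop :=
  ∀ x : Fin 2 ⊕ Fin 2 → ℂ,
    ¬(x (Sum.inl 0) = 0 ∧ x (Sum.inl 1) = 0) →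
    ¬(x (Sum.inr 0) = 0 ∧ x (Sum.inr 1) = 0) →
    eval x F = 0 → ∃ v, eval x (pderiv v F) ≠ 0

/-- The bidegree `(1,2)` curve `C₀ = {X₁Y₂² + Y₁X₂² = 0}`. -/
def C₀ : MvPolynomial (Fin 2 ⊕ Fin 2) ℂ :=
  X (Sum.inl 0) * X (Sum.inr 1) ^ 2 + X (Sum.inl 1) * X (Sum.inr 0) ^ 2

/-!
Write a form of bidegree `(1,2)` as `X₁ · a + Y₁ · b` with binary quadrics `a, b` in `(X₂, Y₂)`:
the first factor of `SL₂ × SL₂` recombines `a, b` linearly, the second substitutes into both.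
Smoothness forces `a` and `b` to have no common zero. The discriminant of `s a + t b` is a binary
quadratic in `(s, t)`, so the pencil contains a square `L²`, with `L ≠ 0` since `a, b` have no
common zero. Moving `L²` to `Y₂²` and completing the square in the other member of the pencil
reaches `X₁Y₂² + Y₁X₂²`. For the stabilizer, the six coefficients of `(g, h) · C₀ = c • C₀` force
`g` and `h` to be both diagonal or both antidiagonal.
-/

open scoped Matrix

section BinaryQuadratic

variable {K : Type*} [Field K]

def quadForm (a : Fin 3 → K) (u v : K) : K := a 0 * u ^ 2 + a 1 * (u * v) + a 2 * v ^ 2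

def sqCoeffs (α β : K) : Fin 3 → K := ![α ^ 2, 2 * α * β, β ^ 2]

def quadSubst (h : Matrix (Fin 2) (Fin 2) K) : (Fin 3 → K) →ₗ[K] (Fin 3 → K) where
  toFun a := ![quadForm a (h 0 0) (h 1 0),
    2 * a 0 * h 0 0 * h 0 1 + a 1 * (h 0 0 * h 1 1 + h 0 1 * h 1 0) + 2 * a 2 * h 1 0 * h 1 1,
    quadForm a (h 0 1) (h 1 1)]
  map_add' a b := by ext k; fin_cases k <;> simp [quadForm] <;> ring
  map_smul' c a := by ext k; fin_cases k <;> simp [quadForm] <;> ring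

def NoCommonZero (a b : Fin 3 → K) : Prop :=
  ∀ u v, quadForm a u v = 0 → quadForm b u v = 0 → u = 0 ∧ v = 0

lemma quadForm_smul_add_smul (s t : K) (a b : Fin 3 → K) (u v : K) :
    quadForm (s • a + t • b) u v = s * quadForm a u v + t * quadForm b u v := by
  simp only [quadForm, Pi.add_apply, Pi.smul_apply, smul_eq_mul]; ring

lemma quadForm_sqCoeffs (α β u v : K) : quadForm (sqCoeffs α β) u v = (α * u + β * v) ^ 2 := by
  simp only [quadForm, sqCoeffs, Matrix.cons_val_zero, Matrix.cons_val_one, Matrix.cons_val]; ring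

lemma quadForm_quadSubst (h : Matrix (Fin 2) (Fin 2) K) (a : Fin 3 → K) (u v : K) :
    quadForm (quadSubst h a) u v = quadForm a (h 0 0 * u + h 0 1 * v) (h 1 0 * u + h 1 1 * v) := by
  simp only [quadForm, quadSubst, LinearMap.coe_mk, AddHom.coe_mk, Matrix.cons_val_zero,
    Matrix.cons_val_one, Matrix.cons_val]
  ring

lemma quadSubst_sqCoeffs (h : Matrix (Fin 2) (Fin 2) K) (α β : K) :
    quadSubst h (sqCoeffs α β) = sqCoeffs (α * h 0 0 + β * h 1 0) (α * h 0 1 + β * h 1 1) := by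
  ext k; fin_cases k <;> simp [quadSubst, quadForm, sqCoeffs] <;> ring

lemma exists_quadForm_eq_zero [IsAlgClosed K] (a : Fin 3 → K) :
    ∃ u v : K, ¬(u = 0 ∧ v = 0) ∧ quadForm a u v = 0 := by
  by_cases ha : a 0 = 0
  · exact ⟨1, 0, by simp, by simp [quadForm, ha]⟩
  obtain ⟨u, hu⟩ := IsAlgClosed.exists_root (Polynomial.C (a 0) * Polynomial.X ^ 2 +
    Polynomial.C (a 1) * Polynomial.X + Polynomial.C (a 2))
    (by simp [Polynomial.degree_quadratic ha])
  refine ⟨u, 1, by simp, ?_⟩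
  simp only [Polynomial.IsRoot, Polynomial.eval_add, Polynomial.eval_mul, Polynomial.eval_C,
    Polynomial.eval_pow, Polynomial.eval_X] at hu
  linear_combination (norm := (simp only [quadForm]; ring_nf)) hu

lemma exists_eq_sqCoeffs_of_discrim_eq_zero [IsAlgClosed K] [NeZero (2 : K)] {a : Fin 3 → K}
    (h : discrim (a 0) (a 1) (a 2) = 0) : ∃ α β : K, a = sqCoeffs α β := by
  rw [discrim] at h
  by_cases ha : a 0 = 0
  · obtain ⟨β, hβ⟩ := IsAlgClosed.exists_eq_mul_self (a 2)
    refine ⟨0, β, ?_⟩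
    ext k; fin_cases k <;> simp [sqCoeffs, ha, hβ, sq]
    simpa [ha] using h
  · obtain ⟨α, hα⟩ := IsAlgClosed.exists_eq_mul_self (a 0)
    have hα0 : α ≠ 0 := by rintro rfl; simp_all
    refine ⟨α, a 1 / (2 * α), ?_⟩
    ext k; fin_cases k <;> simp [sqCoeffs, hα, sq] <;> field_simp
    linear_combination -h - 4 * a 2 * hα

lemma exists_left_kernel_of_right_kernel {p q p' q' u v : K} (huv : ¬(u = 0 ∧ v = 0))
    (h : p * u + q * v = 0) (h' : p' * u + q' * v = 0) :
    ∃ s t : K, ¬(s = 0 ∧ t = 0) ∧ s * p + t * p' = 0 ∧ s * q + t * q' = 0 := by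
  have hdet : (!![p, q; p', q']).det = 0 := by
    rw [← Matrix.exists_mulVec_eq_zero_iff]
    refine ⟨![u, v], ?_, ?_⟩
    · simpa [funext_iff, Fin.forall_fin_two] using huv
    · ext i; fin_cases i <;> simp [Matrix.mulVec, dotProduct, h, h']
  obtain ⟨w, hw, hwM⟩ := Matrix.exists_vecMul_eq_zero_iff.mpr hdet
  refine ⟨w 0, w 1, ?_, ?_, ?_⟩
  · simpa [funext_iff, Fin.forall_fin_two] using hw
  · simpa [Matrix.vecMul, dotProduct] using congrFun hwM 0
  · simpa [Matrix.vecMul, dotProduct] using congrFun hwM 1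

lemma NoCommonZero.smul_add_smul_ne_zero [IsAlgClosed K] {a b : Fin 3 → K}
    (h : NoCommonZero a b) {s t : K} (hst : ¬(s = 0 ∧ t = 0)) : s • a + t • b ≠ 0 := by
  intro hab
  have hpencil (u v : K) : s * quadForm a u v + t * quadForm b u v = 0 := by
    rw [← quadForm_smul_add_smul, hab]; simp [quadForm]
  by_cases hs : s = 0
  · obtain ⟨u, v, huv, hu⟩ := exists_quadForm_eq_zero a
    have ht : t ≠ 0 := fun ht => hst ⟨hs, ht⟩
    exact huv (h u v hu (by simpa [hs, ht] using hpencil u v))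
  · obtain ⟨u, v, huv, hv⟩ := exists_quadForm_eq_zero b
    exact huv (h u v (by simpa [hv, hs] using hpencil u v) hv)

/-- The discriminant of `s • a + t • b` is a binary quadratic form in `(s, t)`; a zero of it
is a square in the pencil. -/
lemma NoCommonZero.exists_smul_add_smul_eq_sqCoeffs [IsAlgClosed K] [NeZero (2 : K)]
    {a b : Fin 3 → K} (h : NoCommonZero a b) :
    ∃ s t α β : K, ¬(s = 0 ∧ t = 0) ∧ ¬(α = 0 ∧ β = 0) ∧ s • a + t • b = sqCoeffs α β := by
  obtain ⟨s, t, hst, hdisc⟩ := exists_quadForm_eq_zero ![discrim (a 0) (a 1) (a 2),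
    2 * a 1 * b 1 - 4 * a 0 * b 2 - 4 * a 2 * b 0, discrim (b 0) (b 1) (b 2)]
  obtain ⟨α, β, hαβ⟩ := exists_eq_sqCoeffs_of_discrim_eq_zero (a := s • a + t • b) (by
    simp only [quadForm, discrim, Matrix.cons_val] at hdisc
    simp only [discrim, Pi.add_apply, Pi.smul_apply, smul_eq_mul]
    linear_combination hdisc)
  refine ⟨s, t, α, β, hst, ?_, hαβ⟩
  rintro ⟨rfl, rfl⟩
  exact h.smul_add_smul_ne_zero hst (hαβ.trans (by ext k; fin_cases k <;> simp [sqCoeffs]))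

end BinaryQuadratic

def expo12 (i : Fin 2) (k : Fin 3) : (Fin 2 ⊕ Fin 2) →₀ ℕ :=
  Finsupp.single (Sum.inl i) 1 + Finsupp.single (Sum.inr 0) (2 - (k : ℕ)) +
    Finsupp.single (Sum.inr 1) (k : ℕ)

/-- `X₁ · a(X₂, Y₂) + Y₁ · b(X₂, Y₂)` for the coefficient vectors `a = M 0`, `b = M 1`. -/
def form12 (M : Fin 2 → Fin 3 → ℂ) : MvPolynomial (Fin 2 ⊕ Fin 2) ℂ :=
  ∑ i, ∑ k, monomial (expo12 i k) (M i k)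

lemma expo12_inj {i i' : Fin 2} {k k' : Fin 3} : expo12 i k = expo12 i' k' ↔ i = i' ∧ k = k' := by
  refine ⟨fun h => ⟨?_, ?_⟩, fun ⟨hi, hk⟩ => hi ▸ hk ▸ rfl⟩
  · have := DFunLike.congr_fun h (Sum.inl i)
    simpa [expo12, Finsupp.single_apply, eq_comm] using this
  · have := DFunLike.congr_fun h (Sum.inr 1)
    simpa [expo12, Finsupp.single_apply, Fin.ext_iff] using this

lemma exists_expo12_eq {d : (Fin 2 ⊕ Fin 2) →₀ ℕ} (h₁ : d (Sum.inl 0) + d (Sum.inl 1) = 1)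
    (h₂ : d (Sum.inr 0) + d (Sum.inr 1) = 2) : ∃ i k, expo12 i k = d := by
  refine ⟨if d (Sum.inl 0) = 1 then 0 else 1, ⟨d (Sum.inr 1), by omega⟩, ?_⟩
  ext (j | j) <;> fin_cases j <;> split_ifs <;> simp [expo12] <;> omega

lemma coeff_form12 (M : Fin 2 → Fin 3 → ℂ) (d : (Fin 2 ⊕ Fin 2) →₀ ℕ) :
    coeff d (form12 M) = ∑ i, ∑ k, if expo12 i k = d then M i k else 0 := by
  simp [form12, coeff_sum, coeff_monomial]

lemma coeff_expo12_form12 (M : Fin 2 → Fin 3 → ℂ) (i : Fin 2) (k : Fin 3) :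
    coeff (expo12 i k) (form12 M) = M i k := by
  simp [coeff_form12, expo12_inj, ite_and]

lemma form12_injective : Function.Injective form12 := fun M M' h => by
  ext i k; simpa [coeff_expo12_form12] using congrArg (coeff (expo12 i k)) h

lemma IsBihom.eq_form12 {F : MvPolynomial (Fin 2 ⊕ Fin 2) ℂ} (hF : IsBihom 1 2 F) :
    F = form12 (fun i k => coeff (expo12 i k) F) := by
  ext d
  rw [coeff_form12]
  by_cases hd : d ∈ F.support
  · obtain ⟨i, k, rfl⟩ := exists_expo12_eq (hF d hd).1 (hF d hd).2
    simp [expo12_inj, ite_and]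
  · rw [notMem_support_iff.mp hd]
    refine (Finset.sum_eq_zero fun i _ => Finset.sum_eq_zero fun k _ => ?_).symm
    split_ifs with h
    · rw [h, notMem_support_iff.mp hd]
    · rfl

lemma monomial_expo12 (i : Fin 2) (k : Fin 3) (c : ℂ) :
    monomial (expo12 i k) c =
      C c * X (Sum.inl i) * X (Sum.inr 0) ^ (2 - k : ℕ) * X (Sum.inr 1) ^ (k : ℕ) := by
  simp only [expo12, monomial_eq, C_mul', Finsupp.prod_add_index', pow_zero, pow_add,
    Finsupp.prod_single_index, pow_one, smul_mul_assoc, implies_true]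

lemma eval_form12 (M : Fin 2 → Fin 3 → ℂ) (x : Fin 2 ⊕ Fin 2 → ℂ) :
    eval x (form12 M) = ∑ i, x (Sum.inl i) * quadForm (M i) (x (Sum.inr 0)) (x (Sum.inr 1)) := by
  simp [form12, monomial_expo12, Fin.sum_univ_three, quadForm]
  ring

lemma eval_pderiv_inl_form12 (M : Fin 2 → Fin 3 → ℂ) (x : Fin 2 ⊕ Fin 2 → ℂ) (i : Fin 2) :
    eval x (pderiv (Sum.inl i) (form12 M)) = quadForm (M i) (x (Sum.inr 0)) (x (Sum.inr 1)) := by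
  fin_cases i <;> simp [form12, monomial_expo12, Fin.sum_univ_three, quadForm] <;> ring

lemma eval_pderiv_inr_form12 (M : Fin 2 → Fin 3 → ℂ) (x : Fin 2 ⊕ Fin 2 → ℂ) :
    eval x (pderiv (Sum.inr 0) (form12 M)) =
      ∑ i, x (Sum.inl i) * (2 * M i 0 * x (Sum.inr 0) + M i 1 * x (Sum.inr 1)) ∧
    eval x (pderiv (Sum.inr 1) (form12 M)) =
      ∑ i, x (Sum.inl i) * (M i 1 * x (Sum.inr 0) + 2 * M i 2 * x (Sum.inr 1)) := by
  constructor <;> simp [form12, monomial_expo12, Fin.sum_univ_three] <;> ring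

lemma eval_biSubst (g h : SL2) (p : MvPolynomial (Fin 2 ⊕ Fin 2) ℂ) (x : Fin 2 ⊕ Fin 2 → ℂ) :
    eval x (biSubst g h p) = eval (Sum.elim (g.1 *ᵥ (x ∘ Sum.inl)) (h.1 *ᵥ (x ∘ Sum.inr))) p := by
  change aeval x (biSubst g h p) = aeval _ p
  rw [biSubst, ← AlgHom.comp_apply, comp_aeval]
  congr 2; ext (i | i) <;> fin_cases i <;> simp

lemma biSubst_biSubst (g h g' h' : SL2) (p : MvPolynomial (Fin 2 ⊕ Fin 2) ℂ) :
    biSubst g h (biSubst g' h' p) = biSubst (g' * g) (h' * h) p := by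
  refine MvPolynomial.funext fun x => ?_
  simp only [eval_biSubst, Matrix.SpecialLinearGroup.coe_mul, ← Matrix.mulVec_mulVec]
  rfl

lemma biSubst_one (p : MvPolynomial (Fin 2 ⊕ Fin 2) ℂ) : biSubst 1 1 p = p := by
  refine MvPolynomial.funext fun x => ?_
  simp [eval_biSubst]

lemma smul_form12 (c : ℂ) (M : Fin 2 → Fin 3 → ℂ) : c • form12 M = form12 (c • M) := by
  simp [form12, Finset.smul_sum, smul_monomial]

lemma C₀_eq_form12 : C₀ = form12 ![sqCoeffs 0 1, sqCoeffs 1 0] := by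
  refine MvPolynomial.funext fun x => ?_
  simp [C₀, eval_form12, quadForm_sqCoeffs]

lemma biSubst_form12 (g h : SL2) (M : Fin 2 → Fin 3 → ℂ) :
    biSubst g h (form12 M) = form12 fun i => quadSubst h.1 (∑ j, g.1 j i • M j) := by
  refine MvPolynomial.funext fun x => ?_
  simp only [eval_biSubst, eval_form12, quadForm_quadSubst, Fin.sum_univ_two,
    quadForm_smul_add_smul, Sum.elim_inl, Sum.elim_inr, Matrix.mulVec, dotProduct,
    Function.comp_apply]
  ring

/-- At a common zero `(u, v)` of the two quadrics, Euler's identity makes their gradients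
dependent, and a vanishing combination `(s, t)` of them gives the singular point `([s,t],[u,v])`. -/
lemma SmoothCurve.noCommonZero {M : Fin 2 → Fin 3 → ℂ} (hs : SmoothCurve (form12 M)) :
    NoCommonZero (M 0) (M 1) := by
  intro u v ha hb
  by_contra huv
  obtain ⟨s, t, hst, hdu, hdv⟩ := exists_left_kernel_of_right_kernel huv
    (p := 2 * M 0 0 * u + M 0 1 * v) (q := M 0 1 * u + 2 * M 0 2 * v)
    (p' := 2 * M 1 0 * u + M 1 1 * v) (q' := M 1 1 * u + 2 * M 1 2 * v)
    (by rw [quadForm] at ha; linear_combination 2 * ha)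
    (by rw [quadForm] at hb; linear_combination 2 * hb)
  obtain ⟨w, hw⟩ := hs (Sum.elim ![s, t] ![u, v]) (by simpa using hst) (by simpa using huv)
    (by simp [eval_form12, ha, hb])
  obtain ⟨hd0, hd1⟩ := eval_pderiv_inr_form12 M (Sum.elim ![s, t] ![u, v])
  simp only [Sum.elim_inl, Sum.elim_inr, Matrix.cons_val_zero, Matrix.cons_val_one,
    Fin.sum_univ_two] at hd0 hd1
  rcases w with i | j
  · fin_cases i <;> simp [eval_pderiv_inl_form12, ha, hb] at hw
  · fin_cases j
    · exact hw (hd0.trans (by linear_combination hdu))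
    · exact hw (hd1.trans (by linear_combination hdv))

def ProjEquiv (F F' : MvPolynomial (Fin 2 ⊕ Fin 2) ℂ) : Prop :=
  ∃ (g h : SL2) (c : ℂˣ), biSubst g h F = (c : ℂ) • F'

lemma ProjEquiv.symm {F F' : MvPolynomial (Fin 2 ⊕ Fin 2) ℂ} (hF : ProjEquiv F F') :
    ProjEquiv F' F := by
  obtain ⟨g, h, c, hc⟩ := hF
  refine ⟨g⁻¹, h⁻¹, c⁻¹, ?_⟩
  have := congrArg (biSubst g⁻¹ h⁻¹) hc
  rw [biSubst_biSubst, mul_inv_cancel, mul_inv_cancel, biSubst_one, map_smul] at this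
  rw [this, smul_smul, ← Units.val_mul, inv_mul_cancel, Units.val_one, one_smul]

lemma ProjEquiv.trans {F F' F'' : MvPolynomial (Fin 2 ⊕ Fin 2) ℂ} (hF : ProjEquiv F F')
    (hF' : ProjEquiv F' F'') : ProjEquiv F F'' := by
  obtain ⟨g, h, c, hc⟩ := hF
  obtain ⟨g', h', c', hc'⟩ := hF'
  refine ⟨g * g', h * h', c * c', ?_⟩
  rw [← biSubst_biSubst, hc, map_smul, hc', smul_smul, Units.val_mul]

lemma SL2.det_fin_two (g : SL2) : g.1 0 0 * g.1 1 1 - g.1 0 1 * g.1 1 0 = 1 := by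
  rw [← Matrix.det_fin_two]; exact g.2

lemma exists_SL2_eq {a b c d : ℂ} (h : a * d - b * c = 1) : ∃ g : SL2, g.1 = !![a, b; c, d] :=
  ⟨⟨!![a, b; c, d], by rwa [Matrix.det_fin_two_of]⟩, rfl⟩

lemma exists_SL2_col_eq {s t : ℂ} (hst : ¬(s = 0 ∧ t = 0)) :
    ∃ g : SL2, g.1 0 0 = s ∧ g.1 1 0 = t := by
  by_cases hs : s = 0
  · have ht : t ≠ 0 := fun ht => hst ⟨hs, ht⟩
    obtain ⟨g, hg⟩ := exists_SL2_eq (a := s) (b := -t⁻¹) (c := t) (d := 0) (by simp [ht])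
    exact ⟨g, by simp [hg]⟩
  · obtain ⟨g, hg⟩ := exists_SL2_eq (a := s) (b := 0) (c := t) (d := s⁻¹) (by simp [hs])
    exact ⟨g, by simp [hg]⟩

/-- Move a square `(α X₂ + β Y₂)²` of the pencil to the first row and then to `Y₂²`. -/
lemma NoCommonZero.projEquiv_form12_sqCoeffs {M : Fin 2 → Fin 3 → ℂ}
    (hM : NoCommonZero (M 0) (M 1)) :
    ∃ b : Fin 3 → ℂ, b 0 ≠ 0 ∧ ProjEquiv (form12 M) (form12 ![sqCoeffs 0 1, b]) := by
  obtain ⟨s, t, α, β, hst, hαβ, hsq⟩ := hM.exists_smul_add_smul_eq_sqCoeffs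
  obtain ⟨g, hg0, hg1⟩ := exists_SL2_col_eq hst
  obtain ⟨h, hh0, hh1⟩ := exists_SL2_col_eq (s := β) (t := -α) fun h => hαβ (by simpa using h.symm)
  refine ⟨quadSubst h.1 (g.1 0 1 • M 0 + g.1 1 1 • M 1), ?_, g, h, 1, ?_⟩
  · intro hb
    have h0 : quadForm (g.1 0 0 • M 0 + g.1 1 0 • M 1) β (-α) = 0 := by
      rw [hg0, hg1, hsq, quadForm_sqCoeffs]; ring
    have h1 : quadForm (g.1 0 1 • M 0 + g.1 1 1 • M 1) β (-α) = 0 := by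
      simpa [quadSubst, hh0, hh1] using hb
    rw [quadForm_smul_add_smul] at h0 h1
    have hdet := SL2.det_fin_two g
    obtain ⟨hβ, hα⟩ := hM β (-α)
      (by linear_combination g.1 1 1 * h0 - g.1 1 0 * h1 - quadForm (M 0) β (-α) * hdet)
      (by linear_combination g.1 0 0 * h1 - g.1 0 1 * h0 - quadForm (M 1) β (-α) * hdet)
    exact hαβ ⟨neg_eq_zero.mp hα, hβ⟩
  · rw [biSubst_form12, Units.val_one, one_smul]
    refine congrArg form12 (funext_iff.2 (Fin.forall_fin_two.2 ⟨?_, ?_⟩))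
    · have hdet := SL2.det_fin_two h
      rw [hh0, hh1] at hdet
      simp only [Fin.sum_univ_two, hg0, hg1, hsq, quadSubst_sqCoeffs, hh0, hh1]
      congr 1
      · ring
      · linear_combination hdet
    · simp [Fin.sum_univ_two]

/-- Completing the square: `X₂ ↦ X₂ + c Y₂` removes the `X₂Y₂` term of `b`, and adding a
multiple of the first row `Y₂²` removes its `Y₂²` term. -/
lemma projEquiv_form12_complete_square {b : Fin 3 → ℂ} (hb : b 0 ≠ 0) :
    ProjEquiv (form12 ![sqCoeffs 0 1, b]) (form12 ![sqCoeffs 0 1, b 0 • sqCoeffs 1 0]) := by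
  set c := -b 1 / (2 * b 0)
  obtain ⟨g, hg⟩ := exists_SL2_eq (a := 1) (b := -quadForm b c 1) (c := 0) (d := 1) (by ring)
  obtain ⟨h, hh⟩ := exists_SL2_eq (a := 1) (b := c) (c := 0) (d := 1) (by ring)
  refine ⟨g, h, 1, ?_⟩
  rw [biSubst_form12, Units.val_one, one_smul, hg, hh]
  refine congrArg form12 (funext_iff.2 (Fin.forall_fin_two.2 ⟨?_, ?_⟩))
  · simp [Fin.sum_univ_two, quadSubst_sqCoeffs]
  · ext k; fin_cases k <;>
      simp [Fin.sum_univ_two, quadSubst, quadForm, sqCoeffs, Matrix.vecHead, Matrix.vecTail, c]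
    field_simp
    ring

lemma projEquiv_form12_scale {b₀ : ℂ} (hb : b₀ ≠ 0) :
    ProjEquiv (form12 ![sqCoeffs 0 1, b₀ • sqCoeffs 1 0]) C₀ := by
  obtain ⟨l, hl⟩ := IsAlgClosed.exists_eq_mul_self b₀⁻¹
  have hl0 : l ≠ 0 := by rintro rfl; simp_all
  have hl' : l ^ 2 * b₀ = 1 := by rw [sq, ← hl, inv_mul_cancel₀ hb]
  obtain ⟨g, hg⟩ := exists_SL2_eq (a := l⁻¹) (b := 0) (c := 0) (d := l) (by simp [hl0])
  refine ⟨g, 1, Units.mk0 l⁻¹ (inv_ne_zero hl0), ?_⟩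
  rw [biSubst_form12, C₀_eq_form12, smul_form12, hg]
  refine congrArg form12 (funext_iff.2 (Fin.forall_fin_two.2 ⟨?_, ?_⟩))
  · ext k; fin_cases k <;> simp [Fin.sum_univ_two, quadSubst, quadForm, sqCoeffs]
  · ext k; fin_cases k <;> simp [Fin.sum_univ_two, quadSubst, quadForm, sqCoeffs]
    field_simp
    linear_combination hl'

lemma projEquiv_C₀_of_smooth {F : MvPolynomial (Fin 2 ⊕ Fin 2) ℂ} (hF : IsBihom 1 2 F)
    (hs : SmoothCurve F) : ProjEquiv F C₀ := by
  obtain ⟨M, rfl⟩ : ∃ M, F = form12 M := ⟨_, hF.eq_form12⟩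
  obtain ⟨b, hb, hMb⟩ := hs.noCommonZero.projEquiv_form12_sqCoeffs
  exact hMb.trans ((projEquiv_form12_complete_square hb).trans (projEquiv_form12_scale hb))

lemma biSubst_C₀ (g h : SL2) :
    biSubst g h C₀ = form12 ![
      g.1 0 0 • sqCoeffs (h.1 1 0) (h.1 1 1) + g.1 1 0 • sqCoeffs (h.1 0 0) (h.1 0 1),
      g.1 0 1 • sqCoeffs (h.1 1 0) (h.1 1 1) + g.1 1 1 • sqCoeffs (h.1 0 0) (h.1 0 1)] := by
  rw [C₀_eq_form12, biSubst_form12]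
  refine congrArg form12 (funext_iff.2 (Fin.forall_fin_two.2 ⟨?_, ?_⟩)) <;>
    simp [Fin.sum_univ_two, quadSubst_sqCoeffs]

lemma biSubst_C₀_eq_smul_iff (g h : SL2) (c : ℂ) :
    biSubst g h C₀ = c • C₀ ↔
      g.1 0 0 • sqCoeffs (h.1 1 0) (h.1 1 1) + g.1 1 0 • sqCoeffs (h.1 0 0) (h.1 0 1) =
        c • sqCoeffs 0 1 ∧
      g.1 0 1 • sqCoeffs (h.1 1 0) (h.1 1 1) + g.1 1 1 • sqCoeffs (h.1 0 0) (h.1 0 1) =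
        c • sqCoeffs 1 0 := by
  rw [biSubst_C₀, C₀_eq_form12, smul_form12, form12_injective.eq_iff, funext_iff,
    Fin.forall_fin_two]
  simp

lemma diag_or_antidiag_of_stabilizer_eqns {A B C D p q r s c : ℂ}
    (hg : A * D - B * C = 1) (hh : p * s - q * r = 1)
    (h₁ : A * r ^ 2 + C * p ^ 2 = 0) (h₂ : A * r * s + C * p * q = 0)
    (h₃ : A * s ^ 2 + C * q ^ 2 = c) (h₄ : B * r ^ 2 + D * p ^ 2 = c)
    (h₅ : B * r * s + D * p * q = 0) (h₆ : B * s ^ 2 + D * q ^ 2 = 0) :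
    (B = 0 ∧ C = 0 ∧ q = 0 ∧ r = 0 ∧ A * D = 1 ∧ p * s = 1 ∧ D ^ 2 = s ^ 4) ∨
    (A = 0 ∧ D = 0 ∧ p = 0 ∧ s = 0 ∧ B * C = -1 ∧ q * r = -1 ∧ B ^ 2 = -q ^ 4) := by
  have hAr : A * r = 0 := by linear_combination p * h₂ - q * h₁ - A * r * hh
  have hCp : C * p = 0 := by linear_combination s * h₁ - r * h₂ - C * p * hh
  have hBs : B * s = 0 := by linear_combination p * h₆ - q * h₅ - B * s * hh
  have hDq : D * q = 0 := by linear_combination s * h₅ - r * h₆ - D * q * hh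
  by_cases hA : A = 0
  · have hBC : B * C = -1 := by linear_combination -hg + D * hA
    have hB : B ≠ 0 := left_ne_zero_of_mul (by rw [hBC]; norm_num)
    have hC : C ≠ 0 := right_ne_zero_of_mul (by rw [hBC]; norm_num)
    have hp : p = 0 := (mul_eq_zero.1 hCp).resolve_left hC
    have hqr : q * r = -1 := by linear_combination -hh + s * hp
    have hq : q ≠ 0 := left_ne_zero_of_mul (by rw [hqr]; norm_num)
    have hD : D = 0 := (mul_eq_zero.1 hDq).resolve_right hq
    have hs : s = 0 := (mul_eq_zero.1 hBs).resolve_left hB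
    refine Or.inr ⟨hA, hD, hp, hs, hBC, hqr, ?_⟩
    linear_combination B * q ^ 2 * (h₄ - h₃) - B * q ^ 2 * p ^ 2 * hD + B * q ^ 2 * s ^ 2 * hA
      - B ^ 2 * (q * r - 1) * hqr + q ^ 4 * hBC
  · have hr : r = 0 := (mul_eq_zero.1 hAr).resolve_left hA
    have hps : p * s = 1 := by linear_combination hh + q * hr
    have hC : C = 0 := (mul_eq_zero.1 hCp).resolve_right (left_ne_zero_of_mul_eq_one hps)
    have hAD : A * D = 1 := by linear_combination hg + B * hC
    have hq : q = 0 := (mul_eq_zero.1 hDq).resolve_left (right_ne_zero_of_mul_eq_one hAD)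
    have hB : B = 0 := (mul_eq_zero.1 hBs).resolve_right (right_ne_zero_of_mul_eq_one hps)
    refine Or.inl ⟨hB, hC, hq, hr, hAD, hps, ?_⟩
    linear_combination D * s ^ 2 * (h₄ - h₃) + D * s ^ 2 * q ^ 2 * hC - D * s ^ 2 * r ^ 2 * hB
      + s ^ 4 * hAD - D ^ 2 * (p * s + 1) * hps

lemma diag_or_antidiag_of_biSubst_C₀_eq_smul {g h : SL2} {c : ℂ}
    (hc : biSubst g h C₀ = c • C₀) :
    (∃ lam mu : ℂˣ, (lam : ℂ) ^ 2 = (mu : ℂ) ^ 4 ∧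
        g.1 = !![(lam : ℂ)⁻¹, 0; 0, (lam : ℂ)] ∧ h.1 = !![(mu : ℂ)⁻¹, 0; 0, (mu : ℂ)]) ∨
    (∃ beta gam : ℂˣ, (beta : ℂ) ^ 2 = -(gam : ℂ) ^ 4 ∧
        g.1 = !![0, (beta : ℂ); -(beta : ℂ)⁻¹, 0] ∧ h.1 = !![0, (gam : ℂ); -(gam : ℂ)⁻¹, 0]) := by
  obtain ⟨e₁, e₂⟩ := (biSubst_C₀_eq_smul_iff g h c).1 hc
  have h₁ := congrFun e₁ 0
  have h₂ := congrFun e₁ 1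
  have h₃ := congrFun e₁ 2
  have h₄ := congrFun e₂ 0
  have h₅ := congrFun e₂ 1
  have h₆ := congrFun e₂ 2
  simp only [sqCoeffs, Matrix.smul_cons, smul_eq_mul, Matrix.smul_empty, Pi.add_apply,
    Matrix.cons_val_zero, Matrix.cons_val_one, Matrix.cons_val, mul_zero, mul_one, one_pow,
    zero_pow two_ne_zero] at h₁ h₂ h₃ h₄ h₅ h₆
  rcases diag_or_antidiag_of_stabilizer_eqns (SL2.det_fin_two g) (SL2.det_fin_two h) h₁
    (by linear_combination h₂ / 2) h₃ h₄ (by linear_combination h₅ / 2) h₆ with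
    ⟨hB, hC, hq, hr, hAD, hps, hrel⟩ | ⟨hA, hD, hp, hs, hBC, hqr, hrel⟩
  · left
    refine ⟨Units.mk0 _ (right_ne_zero_of_mul_eq_one hAD),
      Units.mk0 _ (right_ne_zero_of_mul_eq_one hps), hrel, ?_, ?_⟩
    · ext i j; fin_cases i <;> fin_cases j <;> simp [hB, hC, eq_inv_of_mul_eq_one_left hAD]
    · ext i j; fin_cases i <;> fin_cases j <;> simp [hq, hr, eq_inv_of_mul_eq_one_left hps]
  · right
    have hB := left_ne_zero_of_mul (a := g.1 0 1) (b := g.1 1 0) (by rw [hBC]; norm_num)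
    have hq := left_ne_zero_of_mul (a := h.1 0 1) (b := h.1 1 0) (by rw [hqr]; norm_num)
    have hC : g.1 1 0 = -(g.1 0 1)⁻¹ := by field_simp; linear_combination hBC
    have hr : h.1 1 0 = -(h.1 0 1)⁻¹ := by field_simp; linear_combination hqr
    refine ⟨Units.mk0 _ hB, Units.mk0 _ hq, hrel, ?_, ?_⟩
    · ext i j; fin_cases i <;> fin_cases j <;> simp [hA, hC, hD]
    · ext i j; fin_cases i <;> fin_cases j <;> simp [hp, hr, hs]

lemma stabilizes_C₀_of_diag {g h : SL2} {lam mu : ℂˣ} (hrel : (lam : ℂ) ^ 2 = (mu : ℂ) ^ 4)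
    (hg : g.1 = !![(lam : ℂ)⁻¹, 0; 0, (lam : ℂ)]) (hh : h.1 = !![(mu : ℂ)⁻¹, 0; 0, (mu : ℂ)]) :
    biSubst g h C₀ = ((lam : ℂ)⁻¹ * (mu : ℂ) ^ 2) • C₀ := by
  rw [biSubst_C₀_eq_smul_iff, hg, hh]
  constructor <;> ext k <;> fin_cases k <;> simp [sqCoeffs]
  field_simp
  linear_combination hrel

lemma stabilizes_C₀_of_antidiag {g h : SL2} {beta gam : ℂˣ}
    (hrel : (beta : ℂ) ^ 2 = -(gam : ℂ) ^ 4) (hg : g.1 = !![0, (beta : ℂ); -(beta : ℂ)⁻¹, 0])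
    (hh : h.1 = !![0, (gam : ℂ); -(gam : ℂ)⁻¹, 0]) :
    biSubst g h C₀ = (-(beta : ℂ)⁻¹ * (gam : ℂ) ^ 2) • C₀ := by
  rw [biSubst_C₀_eq_smul_iff, hg, hh]
  constructor <;> ext k <;> fin_cases k <;> simp [sqCoeffs]
  field_simp
  linear_combination hrel

lemma stabilizes_C₀_iff (g h : SL2) :
    (∃ c : ℂˣ, biSubst g h C₀ = (c : ℂ) • C₀) ↔
      ((∃ lam mu : ℂˣ, (lam : ℂ) ^ 2 = (mu : ℂ) ^ 4 ∧
          g.1 = !![(lam : ℂ)⁻¹, 0; 0, (lam : ℂ)] ∧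
          h.1 = !![(mu : ℂ)⁻¹, 0; 0, (mu : ℂ)]) ∨
       (∃ beta gam : ℂˣ, (beta : ℂ) ^ 2 = -(gam : ℂ) ^ 4 ∧
          g.1 = !![0, (beta : ℂ); -(beta : ℂ)⁻¹, 0] ∧
          h.1 = !![0, (gam : ℂ); -(gam : ℂ)⁻¹, 0])) := by
  refine ⟨fun ⟨c, hc⟩ => diag_or_antidiag_of_biSubst_C₀_eq_smul hc, ?_⟩
  rintro (⟨lam, mu, hrel, hg, hh⟩ | ⟨beta, gam, hrel, hg, hh⟩)
  · exact ⟨Units.mk0 _ (by simp), stabilizes_C₀_of_diag hrel hg hh⟩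
  · exact ⟨Units.mk0 _ (by simp), stabilizes_C₀_of_antidiag hrel hg hh⟩

/-- Projectively, the first family is `α ↦ ([X₁, α²Y₁], [X₂, αY₂])` with `α = mu²`, and the
second is its composite with the involution `[Xᵢ, Yᵢ] ↦ [Yᵢ, Xᵢ]`. -/
theorem transitive_on_smooth_12_curves_and_stabilizer :
    (∀ F F' : MvPolynomial (Fin 2 ⊕ Fin 2) ℂ,
      IsBihom 1 2 F → F ≠ 0 → SmoothCurve F →
      IsBihom 1 2 F' → F' ≠ 0 → SmoothCurve F' →
      ∃ (g h : SL2) (c : ℂˣ), biSubst g h F = (c : ℂ) • F') ∧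
    (∀ g h : SL2,
      (∃ c : ℂˣ, biSubst g h C₀ = (c : ℂ) • C₀) ↔
      ((∃ lam mu : ℂˣ, (lam : ℂ) ^ 2 = (mu : ℂ) ^ 4 ∧
          g.1 = !![(lam : ℂ)⁻¹, 0; 0, (lam : ℂ)] ∧
          h.1 = !![(mu : ℂ)⁻¹, 0; 0, (mu : ℂ)]) ∨
       (∃ beta gam : ℂˣ, (beta : ℂ) ^ 2 = -(gam : ℂ) ^ 4 ∧
          g.1 = !![0, (beta : ℂ); -(beta : ℂ)⁻¹, 0] ∧
          h.1 = !![0, (gam : ℂ); -(gam : ℂ)⁻¹, 0]))) :=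
  ⟨fun _ _ hF _ hs hF' _ hs' =>
    (projEquiv_C₀_of_smooth hF hs).trans (projEquiv_C₀_of_smooth hF' hs').symm,
   stabilizes_C₀_iff⟩
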